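/- arXiv:math/0509344 — 2 statements merged into one kernel-verified Lean document; each statement's English description precedes it below -/
import Mathlib

section
/- Let X be a Banach space and let (x_n) be a bounded sequence in X. Then for every x in the unit sphere of X there exists a subsequence (x_{n_j}) of (x_n) such that liminf_{j,k→∞} ‖x − (x_{n_j} − x_{n_k})‖ ≥ 1. -/
/-!
Take a norming functional `g` for `x` (`‖g‖ ≤ 1`, `g x = ‖x‖`) and pass to a subsequence along
which the bounded real sequence `g (f n)` converges. Then
`‖x - (f (φ j) - f (φ k))‖ ≥ g x - (g (f (φ j)) - g (f (φ k))) → ‖x‖`.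
-/

open Filter

/-- The modulus of convexity of a normed space. -/
noncomputable def modulusOfConvexity (X : Type*) [NormedAddCommGroup X] [NormedSpace ℝ X]
    (ε : ℝ) : ℝ :=
  sInf {d : ℝ | ∃ x y : X, ‖x‖ = 1 ∧ ‖y‖ = 1 ∧ ε ≤ ‖x - y‖ ∧ d = 1 - ‖x + y‖ / 2}

/-- A normed space is uniformly convex if its modulus of convexity is positive on (0,2]. -/
def IsUnifConvex (X : Type*) [NormedAddCommGroup X] [NormedSpace ℝ X] : Prop :=
  ∀ ε : ℝ, 0 < ε → ε ≤ 2 → 0 < modulusOfConvexity X ε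

open Topology

theorem le_liminf_norm_of_tendsto_apply {E ι : Type*} [NormedAddCommGroup E] [NormedSpace ℝ E]
    {l : Filter ι} [l.NeBot] {g : StrongDual ℝ E} (hg : ‖g‖ ≤ 1) {v : ι → E} {c : ℝ}
    (hgv : Tendsto (fun i => g (v i)) l (𝓝 c))
    (hv : IsBoundedUnder (· ≤ ·) l fun i => ‖v i‖) :
    c ≤ liminf (fun i => ‖v i‖) l := by
  rw [← hgv.liminf_eq]
  refine liminf_le_liminf (Eventually.of_forall fun i => ?_) hgv.isBoundedUnder_ge
    hv.isCoboundedUnder_ge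
  calc g (v i) ≤ ‖g (v i)‖ := le_abs_self _
    _ ≤ ‖g‖ * ‖v i‖ := g.le_opNorm _
    _ ≤ ‖v i‖ := mul_le_of_le_one_left (norm_nonneg _) hg

theorem exists_strictMono_norm_le_liminf_norm_sub_sub {E : Type*} [NormedAddCommGroup E]
    [NormedSpace ℝ E] {f : ℕ → E} {M : ℝ} (hM : ∀ n, ‖f n‖ ≤ M) (x : E) :
    ∃ φ : ℕ → ℕ, StrictMono φ ∧
      ‖x‖ ≤ liminf (fun p : ℕ × ℕ => ‖x - (f (φ p.1) - f (φ p.2))‖) atTop := by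
  obtain ⟨g, hg, hgx⟩ := exists_dual_vector'' ℝ x
  have hgf : ∀ n, g (f n) ∈ Set.Icc (-M) M := fun n => abs_le.mp <|
    calc ‖g (f n)‖ ≤ ‖g‖ * ‖f n‖ := g.le_opNorm _
      _ ≤ ‖f n‖ := mul_le_of_le_one_left (norm_nonneg _) hg
      _ ≤ M := hM n
  obtain ⟨L, -, φ, hφ, hL⟩ := tendsto_subseq_of_bounded (Metric.isBounded_Icc (-M) M) hgf
  refine ⟨φ, hφ, le_liminf_norm_of_tendsto_apply hg ?_ ?_⟩
  · rw [← prod_atTop_atTop_eq]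
    simpa [hgx] using tendsto_const_nhds.sub ((hL.comp tendsto_fst).sub (hL.comp tendsto_snd))
  · refine isBoundedUnder_of ⟨‖x‖ + (M + M), fun p => ?_⟩
    calc ‖x - (f (φ p.1) - f (φ p.2))‖ ≤ ‖x‖ + (‖f (φ p.1)‖ + ‖f (φ p.2)‖) :=
          (norm_sub_le _ _).trans (add_le_add_right (norm_sub_le _ _) _)
      _ ≤ ‖x‖ + (M + M) := by gcongr <;> exact hM _

theorem stmt0_general {X : Type*} [NormedAddCommGroup X] [NormedSpace ℝ X]
    (f : ℕ → X) (hb : ∃ M : ℝ, ∀ n, ‖f n‖ ≤ M) (x : X) (hx : ‖x‖ = 1) :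
    ∃ n : ℕ → ℕ, StrictMono n ∧
      1 ≤ Filter.liminf (fun p : ℕ × ℕ => ‖x - (f (n p.1) - f (n p.2))‖) Filter.atTop := by
  obtain ⟨M, hM⟩ := hb
  simpa only [hx] using exists_strictMono_norm_le_liminf_norm_sub_sub hM x

theorem stmt0 {X : Type*} [NormedAddCommGroup X] [NormedSpace ℝ X] [CompleteSpace X]
    (f : ℕ → X) (hb : ∃ M : ℝ, ∀ n, ‖f n‖ ≤ M) (x : X) (hx : ‖x‖ = 1) :
    ∃ n : ℕ → ℕ, StrictMono n ∧
      1 ≤ Filter.liminf (fun p : ℕ × ℕ => ‖x - (f (n p.1) - f (n p.2))‖) Filter.atTop :=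
  stmt0_general f hb x hx
end

section
/- Let X be a uniformly convex Banach space, 0 < ε ≤ 2, and let δ > 0 satisfy δ ≤ δ_X(ε − δ). If x ∈ S_X, x' ∈ X, and T : X → Y is a linear contraction with |1 − ‖x'‖| < δ, ‖Tx‖ = 1, and ‖Tx − Tx'‖ < δ, then ‖x − x'‖ < ε. -/
/-!
Normalize `x'` to the unit vector `y = x' / ‖x'‖`, which is within `δ` of `x'`. Since `T` is a
contraction with `‖T x‖ = 1` and `‖T x - T y‖ < 2δ`, the midpoint satisfies
`‖x + y‖ ≥ ‖T (x + y)‖ > 2 - 2δ`, so `1 - ‖x + y‖ / 2 < δ ≤ δ_X(ε - δ)`; by definition of the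
modulus this forces `‖x - y‖ < ε - δ`, and the triangle inequality gives `‖x - x'‖ < ε`.
-/

open Filter

lemma bddBelow_modulusOfConvexity_set {X : Type*} [NormedAddCommGroup X] (ε : ℝ) :
    BddBelow {d : ℝ | ∃ x y : X, ‖x‖ = 1 ∧ ‖y‖ = 1 ∧ ε ≤ ‖x - y‖ ∧ d = 1 - ‖x + y‖ / 2} := by
  refine ⟨0, ?_⟩
  rintro _ ⟨x, y, hx, hy, -, rfl⟩
  have := norm_add_le x y
  linarith

section ModulusOfConvexity

variable {X : Type*} [NormedAddCommGroup X] [NormedSpace ℝ X]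

lemma modulusOfConvexity_le {ε : ℝ} {x y : X} (hx : ‖x‖ = 1) (hy : ‖y‖ = 1)
    (hxy : ε ≤ ‖x - y‖) : modulusOfConvexity X ε ≤ 1 - ‖x + y‖ / 2 :=
  csInf_le (bddBelow_modulusOfConvexity_set ε) ⟨x, y, hx, hy, hxy, rfl⟩

-- If the defining set is empty, `sInf ∅ = 0` in `ℝ`.
lemma modulusOfConvexity_le_one (ε : ℝ) : modulusOfConvexity X ε ≤ 1 := by
  unfold modulusOfConvexity
  rcases Set.eq_empty_or_nonempty
      {d : ℝ | ∃ x y : X, ‖x‖ = 1 ∧ ‖y‖ = 1 ∧ ε ≤ ‖x - y‖ ∧ d = 1 - ‖x + y‖ / 2} with h | h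
  · rw [h, Real.sInf_empty]
    exact zero_le_one
  · obtain ⟨_, ⟨x, y, hx, hy, hxy, rfl⟩⟩ := h
    refine (modulusOfConvexity_le hx hy hxy).trans ?_
    linarith [norm_nonneg (x + y)]

end ModulusOfConvexity

lemma norm_sub_inv_norm_smul_self {E : Type*} [NormedAddCommGroup E] [NormedSpace ℝ E]
    {x : E} (hx : x ≠ 0) : ‖x - ‖x‖⁻¹ • x‖ = |1 - ‖x‖| := by
  have hx' : 0 < ‖x‖ := norm_pos_iff.mpr hx
  have hsmul : x - ‖x‖⁻¹ • x = (1 - ‖x‖⁻¹) • x := by rw [sub_smul, one_smul]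
  rw [hsmul, norm_smul, Real.norm_eq_abs, ← abs_of_pos hx', ← abs_mul, abs_of_pos hx', sub_mul,
    inv_mul_cancel₀ hx'.ne', one_mul, abs_sub_comm]

lemma two_mul_norm_apply_sub_le_norm_add {E F : Type*} [NormedAddCommGroup E] [NormedSpace ℝ E]
    [NormedAddCommGroup F] [NormedSpace ℝ F] {T : E →L[ℝ] F} (hT : ‖T‖ ≤ 1) (x y : E) :
    2 * ‖T x‖ - ‖T x - T y‖ ≤ ‖x + y‖ :=
  calc 2 * ‖T x‖ - ‖T x - T y‖ = ‖(2 : ℝ) • T x‖ - ‖T x - T y‖ := by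
        rw [norm_smul, Real.norm_two]
    _ ≤ ‖(2 : ℝ) • T x - (T x - T y)‖ := norm_sub_norm_le _ _
    _ = ‖T (x + y)‖ := by rw [map_add, two_smul]; abel_nf
    _ ≤ ‖x + y‖ := (T.le_of_opNorm_le hT _).trans_eq (one_mul _)

lemma norm_sub_lt_of_le_modulusOfConvexity {X Y : Type*} [NormedAddCommGroup X]
    [NormedSpace ℝ X] [NormedAddCommGroup Y] [NormedSpace ℝ Y] {T : X →L[ℝ] Y} (hT : ‖T‖ ≤ 1)
    {η δ : ℝ} (hδ : δ ≤ modulusOfConvexity X η) {x y : X} (hx : ‖x‖ = 1) (hy : ‖y‖ = 1)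
    (hTx : ‖T x‖ = 1) (hTxy : ‖T x - T y‖ < 2 * δ) : ‖x - y‖ < η := by
  by_contra! hxy
  have hmod := modulusOfConvexity_le hx hy hxy
  have hadd := two_mul_norm_apply_sub_le_norm_add hT x y
  linarith

theorem stmt9_general {X : Type*} [NormedAddCommGroup X] [NormedSpace ℝ X]
    {Y : Type*} [NormedAddCommGroup Y] [NormedSpace ℝ Y]
    (ε δ : ℝ)
    (hδ : δ ≤ modulusOfConvexity X (ε - δ))
    (x x' : X) (T : X →L[ℝ] Y) (hx : ‖x‖ = 1) (hT : ‖T‖ ≤ 1)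
    (h1 : |1 - ‖x'‖| < δ) (h2 : ‖T x‖ = 1) (h3 : ‖T x - T x'‖ < δ) :
    ‖x - x'‖ < ε := by
  have hx'0 : x' ≠ 0 := by
    rintro rfl
    have := hδ.trans (modulusOfConvexity_le_one _)
    simp only [norm_zero, sub_zero, abs_one] at h1
    linarith
  set y := ‖x'‖⁻¹ • x'
  have hy : ‖y‖ = 1 := norm_smul_inv_norm hx'0
  have hx'y : ‖x' - y‖ < δ := by rwa [norm_sub_inv_norm_smul_self hx'0]
  have hTxy : ‖T x - T y‖ < 2 * δ :=
    calc ‖T x - T y‖ ≤ ‖T x - T x'‖ + ‖T (x' - y)‖ := by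
          rw [map_sub]; exact norm_sub_le_norm_sub_add_norm_sub _ _ _
      _ < δ + δ := add_lt_add_of_lt_of_le h3
          ((T.le_of_opNorm_le hT _).trans_eq (one_mul _) |>.trans hx'y.le)
      _ = 2 * δ := by ring
  have hxy : ‖x - y‖ < ε - δ := norm_sub_lt_of_le_modulusOfConvexity hT hδ hx hy h2 hTxy
  calc ‖x - x'‖ ≤ ‖x - y‖ + ‖x' - y‖ := by
        rw [norm_sub_rev x' y]; exact norm_sub_le_norm_sub_add_norm_sub _ _ _
    _ < ε := by linarith

theorem stmt9 {X : Type*} [NormedAddCommGroup X] [NormedSpace ℝ X] [CompleteSpace X]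
    {Y : Type*} [NormedAddCommGroup Y] [NormedSpace ℝ Y] [CompleteSpace Y]
    (hX : IsUnifConvex X) (ε δ : ℝ) (hε0 : 0 < ε) (hε2 : ε ≤ 2)
    (hδ0 : 0 < δ) (hδ : δ ≤ modulusOfConvexity X (ε - δ))
    (x x' : X) (T : X →L[ℝ] Y) (hx : ‖x‖ = 1) (hT : ‖T‖ ≤ 1)
    (h1 : |1 - ‖x'‖| < δ) (h2 : ‖T x‖ = 1) (h3 : ‖T x - T x'‖ < δ) :
    ‖x - x'‖ < ε :=
  stmt9_general ε δ hδ x x' T hx hT h1 h2 h3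
end
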